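/- Let ζ be a primitive root of unity of order dividing q−1 in C_p with ζ ≠ 1, where q is a power of p, and let s ≥ 1. Then the difference Σ_{0<n<q^{N+1}, p∤n} ζ^n/n^s − Σ_{0<n<q^N, p∤n} ζ^n/n^s has p-adic absolute value at most |q^N| · C for a constant C; more precisely it equals Σ_{1≤t≤q−1} Σ_{0<n<q^N, p∤n} ζ^{n+tq^N}/(n+tq^N)^s, which is congruent modulo q^N (in the sense of p-adic valuation ≥ N·v_p(q) minus a bounded amount) to (Σ_{1≤t≤q−1} ζ^t)(Σ_{0<n<q^N, p∤n} ζ^n/n^s) = 0. Consequently the sequence F_N := Σ_{0<n<q^N, p∤n} ζ^n/n^s is p-adically Cauchy and lim_{N→∞} F_N exists in C_p. -/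

import Mathlib

/-!
Write `F_N` for the partial sum up to `q^N` and `d = q^N` with `N ≥ 1`. Splitting `[0, q d)` into
the blocks `t d + [0, d)` gives `F_{N+1} - F_N = Σ_{1 ≤ t < q} Σ_{m < d} ζ^{t d + m}/(t d + m)^s`,
and since `Σ_{1 ≤ t < q} ζ^t = 0` we may subtract `ζ^t ζ^m/m^s` from each term. As `ζ^d = ζ` and
`‖t d + m‖ = ‖m‖ = 1` for `p ∤ m`, each corrected term has norm at most `‖t d‖ ≤ ‖q‖^N`, so by the
ultrametric inequality `‖F_{N+1} - F_N‖ ≤ ‖q‖^N` and `(F_N)` is Cauchy.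
-/

open Filter Topology Finset

theorem Finset.sum_range_mul_eq_sum_sum {M : Type*} [AddCommMonoid M] (f : ℕ → M) (k d : ℕ) :
    ∑ n ∈ range (k * d), f n = ∑ t ∈ range k, ∑ m ∈ range d, f (t * d + m) := by
  induction k with
  | zero => simp
  | succ k ih => rw [Nat.succ_mul, sum_range_add, ih, sum_range_succ]

theorem sum_Ico_one_pow_eq_zero {R : Type*} [Ring R] [NoZeroDivisors R] {ζ : R} {q : ℕ}
    (hζ : ζ ^ (q - 1) = 1) (hζ1 : ζ ≠ 1) : ∑ t ∈ Ico 1 q, ζ ^ t = 0 := by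
  have hgeom : (∑ t ∈ range (q - 1), ζ ^ t) * (ζ - 1) = 0 := by
    rw [geom_sum_mul, hζ, sub_self]
  rw [sum_Ico_eq_sum_range]
  simp_rw [pow_add, pow_one, ← mul_sum, (mul_eq_zero.1 hgeom).resolve_right (sub_ne_zero.2 hζ1),
    mul_zero]

theorem sum_range_mul_sub_sum_range_eq {R : Type*} [CommRing R] {ζ : R} {q : ℕ} (hq : 0 < q)
    (hζ : ∑ t ∈ Ico 1 q, ζ ^ t = 0) (g : ℕ → R) (d : ℕ) :
    ∑ n ∈ range (q * d), g n - ∑ n ∈ range d, g n =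
      ∑ t ∈ Ico 1 q, ∑ m ∈ range d, (g (t * d + m) - ζ ^ t * g m) := by
  simp_rw [sum_sub_distrib, ← mul_sum, ← sum_mul, hζ, zero_mul, sub_zero]
  rw [sum_range_mul_eq_sum_sum, range_eq_Ico, sum_eq_sum_Ico_succ_bot hq]
  simp

theorem norm_pow_sub_pow_le {R : Type*} [NormedCommRing R] [NormOneClass R] [IsUltrametricDist R]
    {a b : R} (ha : ‖a‖ ≤ 1) (hb : ‖b‖ ≤ 1) (s : ℕ) : ‖a ^ s - b ^ s‖ ≤ ‖a - b‖ := by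
  rw [← geom_sum₂_mul]
  refine (norm_mul_le _ _).trans (mul_le_of_le_one_left (norm_nonneg _) ?_)
  refine IsUltrametricDist.norm_sum_le_of_forall_le_of_nonneg zero_le_one fun i _ => ?_
  refine (norm_mul_le _ _).trans (mul_le_one₀ ?_ (norm_nonneg _) ?_)
  · exact (norm_pow_le _ _).trans (pow_le_one₀ (norm_nonneg _) ha)
  · exact (norm_pow_le _ _).trans (pow_le_one₀ (norm_nonneg _) hb)

theorem norm_inv_sub_inv_of_norm_eq_one {K : Type*} [NormedDivisionRing K] {a b : K}
    (ha : ‖a‖ = 1) (hb : ‖b‖ = 1) : ‖a⁻¹ - b⁻¹‖ = ‖a - b‖ := by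
  rw [inv_sub_inv' (norm_ne_zero_iff.1 (ha.symm ▸ one_ne_zero))
    (norm_ne_zero_iff.1 (hb.symm ▸ one_ne_zero)), norm_mul, norm_mul, norm_inv, norm_inv, ha, hb,
    norm_sub_rev]
  simp

section PolylogTerm

variable {K : Type*} [DivisionRing K] (p : ℕ) (ζ : K) (s : ℕ)

noncomputable def polylogTerm (n : ℕ) : K :=
  if p ∣ n then 0 else ζ ^ n / (n : K) ^ s

theorem sum_range_polylogTerm (M : ℕ) :
    ∑ n ∈ range M, polylogTerm p ζ s n =
      ∑ n ∈ (Ico 1 M).filter (fun n => ¬ p ∣ n), ζ ^ n / (n : K) ^ s := by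
  have hfilter : (range M).filter (fun n => ¬ p ∣ n) = (Ico 1 M).filter (fun n => ¬ p ∣ n) := by
    ext n
    simp only [mem_filter, mem_range, mem_Ico, and_congr_left_iff]
    intro hn
    have : n ≠ 0 := by rintro rfl; exact hn (dvd_zero p)
    omega
  rw [← hfilter, sum_filter]
  simp only [polylogTerm, ite_not]

end PolylogTerm

section Ultrametric

variable {K : Type*} [NormedField K] [IsUltrametricDist K]

theorem norm_natCast_eq_one_of_coprime {p n : ℕ} (hp : ‖(p : K)‖ < 1) (h : n.Coprime p) :
    ‖(n : K)‖ = 1 := by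
  refine le_antisymm (IsUltrametricDist.norm_natCast_le_one K n) (not_lt.1 fun hn => ?_)
  have hbezout : (1 : K) = n * (n.gcdA p : K) + p * (n.gcdB p : K) := by
    have := congrArg (Int.cast : ℤ → K) (Nat.gcd_eq_gcd_ab n p)
    rw [h] at this
    push_cast at this
    exact this
  have hA := IsUltrametricDist.norm_intCast_le_one K (n.gcdA p)
  have hB := IsUltrametricDist.norm_intCast_le_one K (n.gcdB p)
  have := IsUltrametricDist.norm_add_le_max (n * (n.gcdA p : K)) (p * (n.gcdB p : K))
  rw [← hbezout, norm_one, norm_mul, norm_mul] at this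
  rcases le_max_iff.1 this with h | h <;> nlinarith [norm_nonneg (n : K), norm_nonneg (p : K)]

variable {p : ℕ} {ζ : K} (s : ℕ)

theorem norm_polylogTerm_mul_add_sub_le (hp : p.Prime) (hpK : ‖(p : K)‖ < 1) (hζ : ‖ζ‖ = 1)
    {d : ℕ} (hpd : p ∣ d) (hζd : ζ ^ d = ζ) (t m : ℕ) :
    ‖polylogTerm p ζ s (t * d + m) - ζ ^ t * polylogTerm p ζ s m‖ ≤ ‖(d : K)‖ := by
  unfold polylogTerm
  by_cases hm : p ∣ m
  · simp [hm, (hpd.mul_left t).add hm]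
  have hmd : ¬ p ∣ t * d + m := fun h => hm ((Nat.dvd_add_right (hpd.mul_left t)).1 h)
  have hunit : ∀ n : ℕ, ¬ p ∣ n → ‖(n : K)‖ = 1 := fun n hn =>
    norm_natCast_eq_one_of_coprime hpK ((hp.coprime_iff_not_dvd.2 hn).symm)
  have hinv : ∀ n : ℕ, ¬ p ∣ n → ‖(n : K)⁻¹‖ ≤ 1 := fun n hn => by
    rw [norm_inv, hunit n hn, inv_one]
  rw [if_neg hmd, if_neg hm, pow_add, pow_mul', hζd]
  calc ‖ζ ^ t * ζ ^ m / ((t * d + m : ℕ) : K) ^ s - ζ ^ t * (ζ ^ m / (m : K) ^ s)‖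
      = ‖((t * d + m : ℕ) : K)⁻¹ ^ s - (m : K)⁻¹ ^ s‖ := by
        rw [mul_div_assoc, ← mul_sub, div_eq_mul_inv, div_eq_mul_inv, ← mul_sub, norm_mul,
          norm_mul, norm_pow, norm_pow, hζ, one_pow, one_pow, one_mul, one_mul, inv_pow, inv_pow]
    _ ≤ ‖((t * d + m : ℕ) : K)⁻¹ - (m : K)⁻¹‖ := norm_pow_sub_pow_le (hinv _ hmd) (hinv _ hm) s
    _ = ‖(t : K) * d‖ := by
        rw [norm_inv_sub_inv_of_norm_eq_one (hunit _ hmd) (hunit _ hm)]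
        push_cast
        ring_nf
    _ ≤ ‖(d : K)‖ := by
        rw [norm_mul]
        exact mul_le_of_le_one_left (norm_nonneg _) (IsUltrametricDist.norm_natCast_le_one K t)

theorem norm_sum_range_mul_sub_sum_range_polylogTerm_le (hp : p.Prime) (hpK : ‖(p : K)‖ < 1)
    {q : ℕ} (hq : 1 < q) (hζq : ζ ^ (q - 1) = 1) (hζ1 : ζ ≠ 1) {d : ℕ} (hpd : p ∣ d)
    (hζd : ζ ^ d = ζ) :
    ‖∑ n ∈ range (q * d), polylogTerm p ζ s n - ∑ n ∈ range d, polylogTerm p ζ s n‖ ≤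
      ‖(d : K)‖ := by
  have hζ : ‖ζ‖ = 1 := (isOfFinOrder_iff_pow_eq_one.2 ⟨q - 1, by omega, hζq⟩).norm_eq_one
  rw [sum_range_mul_sub_sum_range_eq (by omega) (sum_Ico_one_pow_eq_zero hζq hζ1)]
  refine IsUltrametricDist.norm_sum_le_of_forall_le_of_nonneg (norm_nonneg _) fun t _ => ?_
  exact IsUltrametricDist.norm_sum_le_of_forall_le_of_nonneg (norm_nonneg _) fun m _ =>
    norm_polylogTerm_mul_add_sub_le s hp hpK hζ hpd hζd t m

end Ultrametric

theorem stmt16_general (p : ℕ) (hp : p.Prime) {K : Type*} [NormedField K] [CompleteSpace K]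
    (hna : IsNonarchimedean (norm : K → ℝ)) (hpK : ‖(p : K)‖ = (p : ℝ)⁻¹)
    (q e : ℕ) (he : 1 ≤ e) (hq : q = p ^ e)
    (ζ : K) (hζ : ζ ^ (q - 1) = 1) (hζ1 : ζ ≠ 1)
    (s : ℕ) :
    ∃ L : K,
      Tendsto (fun N : ℕ =>
          ∑ n ∈ (Finset.Ico 1 (q ^ N)).filter (fun n => ¬ p ∣ n),
            ζ ^ n / (n : K) ^ s)
        atTop (𝓝 L) := by
  have := IsUltrametricDist.isUltrametricDist_of_isNonarchimedean_norm hna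
  simp_rw [← sum_range_polylogTerm]
  have hpK1 : ‖(p : K)‖ < 1 := hpK ▸ inv_lt_one_of_one_lt₀ (by exact_mod_cast hp.one_lt)
  have hqK : ‖(q : K)‖ < 1 := by
    rw [hq, Nat.cast_pow, norm_pow]
    exact pow_lt_one₀ (norm_nonneg _) hpK1 (by omega)
  have hq1 : 1 < q := hq ▸ Nat.one_lt_pow (by omega) hp.one_lt
  have hpq : p ∣ q := hq ▸ dvd_pow_self p (by omega)
  have hζq : ζ ^ q = ζ := by rw [← pow_sub_one_mul (by omega : q ≠ 0), hζ, one_mul]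
  have hζpow : ∀ N, ζ ^ q ^ N = ζ := by
    intro N
    induction N with
    | zero => simp
    | succ N ih => rw [pow_succ, pow_mul, ih, hζq]
  set F : ℕ → K := fun N => ∑ n ∈ range (q ^ N), polylogTerm p ζ s n
  have hstep : ∀ N, dist (F (N + 1)) (F (N + 1 + 1)) ≤ ‖(q : K)‖ * ‖(q : K)‖ ^ N := by
    intro N
    rw [dist_comm, dist_eq_norm, ← pow_succ', ← norm_pow, ← Nat.cast_pow]
    simp only [F, pow_succ' q (N + 1)]
    exact norm_sum_range_mul_sub_sum_range_polylogTerm_le s hp hpK1 hq1 hζ hζ1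
      (dvd_pow hpq (by omega)) (hζpow _)
  exact cauchySeq_tendsto_of_complete
    ((cauchySeq_shift 1).1 (cauchySeq_of_le_geometric _ _ hqK hstep))

/-- let `q = p^e` and `ζ ≠ 1` a root of unity with `ζ^{q−1} = 1` in a
complete nonarchimedean normed field with `‖p‖ = 1/p` (modeling `ℂ_p`), and `s ≥ 1`.
Then the partial sums `F_N = Σ_{0<n<q^N, p∤n} ζ^n/n^s` converge:
`lim_{N→∞} F_N` exists. -/
theorem stmt16 (p : ℕ) (hp : p.Prime) {K : Type*} [NormedField K] [CompleteSpace K]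
    (hna : IsNonarchimedean (norm : K → ℝ)) (hpK : ‖(p : K)‖ = (p : ℝ)⁻¹)
    (q e : ℕ) (he : 1 ≤ e) (hq : q = p ^ e)
    (ζ : K) (hζ : ζ ^ (q - 1) = 1) (hζ1 : ζ ≠ 1)
    (s : ℕ) (hs : 1 ≤ s) :
    ∃ L : K,
      Tendsto (fun N : ℕ =>
          ∑ n ∈ (Finset.Ico 1 (q ^ N)).filter (fun n => ¬ p ∣ n),
            ζ ^ n / (n : K) ^ s)
        atTop (𝓝 L) :=
  stmt16_general p hp hna hpK q e he hq ζ hζ hζ1 s
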